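/- Let K be a field and α = Σ_{i ≤ −1} c_i T^i ∈ K((T⁻¹)) a formal Laurent series of positive order. For j ≥ 1, let H_j(α) be the j × j Hankel matrix whose (k, l) entry is c_{−(k+l−1)} for 1 ≤ k, l ≤ j. Then α has a convergent p_n/q_n with deg q_n = j if and only if det H_j(α) ≠ 0. -/

import Mathlib

/-!
Write `Eₙ = qₙ α - pₙ`. The recursion `α_{n+1} Eₙ = -E_{n-1}` gives `ord Eₙ = deg q_{n+1}`, and
`Eₙ = 0` once the expansion stops. A kernel vector of `H_j` is the coefficient vector of a nonzero
`q` with `deg q < j` for which `q α` differs from some polynomial `p` by a series of order `> j`.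
If `deg q_{k+1} = j`, such a `q` makes `q pₖ - qₖ p = qₖ (q α - p) - q Eₖ` a polynomial of absolute
value `< 1`, hence zero; as `qₖ, pₖ` are coprime, `(q, p)` is then a multiple of `(qₖ, pₖ)`, whose
error has order at most `j`. Conversely, if no `qₙ` has degree `j`, the last `qₙ` of degree `< j`
has `ord Eₙ > j` and yields a kernel vector.
-/

noncomputable section

namespace PaperCF

variable {K : Type*} [Field K]

/-- The element `T` of `K((T⁻¹))`, where `K((T⁻¹))` is modeled as the field
`LaurentSeries K` of Laurent series in the variable `t = T⁻¹`. -/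
def Tvar (K : Type*) [Field K] : LaurentSeries K := (HahnSeries.single (-1 : ℤ) (1 : K))

/-- The embedding of `K[T]` into `K((T⁻¹))`, sending the polynomial variable to `T = t⁻¹`. -/
def emb : Polynomial K →+* LaurentSeries K := (Polynomial.aeval (Tvar K)).toRingHom

/-- The polynomial part `⌊α⌋` of a formal Laurent series `α ∈ K((T⁻¹))`. -/
def polyPart (α : LaurentSeries K) : Polynomial K :=
  ∑ i ∈ Finset.range ((-α.order).toNat + 1), Polynomial.monomial i (α.coeff (-(i : ℤ)))

/-- The complete quotients `αₙ` of the regular continued fraction expansion of `α`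
(with the convention `0⁻¹ = 0`, so that `cq α n = 0` for all `n` past the end of a
finite expansion). -/
def cq (α : LaurentSeries K) : ℕ → LaurentSeries K
  | 0 => α
  | n + 1 => (cq α n - emb (polyPart (cq α n)))⁻¹

/-- The partial quotients `aₙ = ⌊αₙ⌋` of the regular continued fraction expansion of `α`. -/
def pq (α : LaurentSeries K) (n : ℕ) : Polynomial K := polyPart (cq α n)

/-- The continuants `(pₙ, qₙ)` of the regular continued fraction expansion of `α`. -/
def cont (α : LaurentSeries K) : ℕ → Polynomial K × Polynomial K
  | 0 => (pq α 0, 1)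
  | 1 => (pq α 1 * pq α 0 + 1, pq α 1)
  | n + 2 => (pq α (n + 2) * (cont α (n + 1)).1 + (cont α n).1,
              pq α (n + 2) * (cont α (n + 1)).2 + (cont α n).2)

/-- `pₙ`. -/
def contP (α : LaurentSeries K) (n : ℕ) : Polynomial K := (cont α n).1

/-- `qₙ`. -/
def contQ (α : LaurentSeries K) (n : ℕ) : Polynomial K := (cont α n).2

/-- The `n`-th partial quotient (and hence the `n`-th convergent) of `α` genuinely exists. -/
def ConvAt (α : LaurentSeries K) (n : ℕ) : Prop := n = 0 ∨ cq α n ≠ 0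

/-- `K(α) = sup_{n ≥ 1} deg aₙ`, as an extended natural number. -/
def KK (α : LaurentSeries K) : ℕ∞ :=
  ⨆ n : {n : ℕ // 1 ≤ n ∧ cq α n ≠ 0}, ((pq α n.1).natDegree : ℕ∞)

/-- `ōK(α) = limsup_n deg aₙ`. -/
def KKbar (α : LaurentSeries K) : ℕ∞ :=
  Filter.limsup (fun n => ((pq α n).natDegree : ℕ∞)) Filter.atTop

/-- `α` is a rational function, i.e. an element of `K(T) ⊆ K((T⁻¹))`. -/
def IsRat (α : LaurentSeries K) : Prop :=
  ∃ p q : Polynomial K, q ≠ 0 ∧ α * emb q = emb p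

/-- Two Laurent series are equivalent if they differ by a Möbius transformation with
matrix in `GL₂(K[T])`. -/
def MEquiv (α β : LaurentSeries K) : Prop :=
  ∃ a b c d : Polynomial K, IsUnit (a * d - b * c) ∧
    emb c * α + emb d ≠ 0 ∧ β = (emb a * α + emb b) / (emb c * α + emb d)

end PaperCF

namespace PaperCF

/-- The `j × j` Hankel matrix of `α = Σ_{i ≤ -1} c_i T^i`: its `(k, l)` entry (0-indexed)
is `c_{-(k+l+1)}`, i.e. the coefficient of `t^(k+l+1)` where `t = T⁻¹`. -/
def hankel {K : Type*} [Field K] (α : LaurentSeries K) (j : ℕ) :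
    Matrix (Fin j) (Fin j) K :=
  Matrix.of fun k l => α.coeff ((k.1 : ℤ) + (l.1 : ℤ) + 1)

end PaperCF

namespace PaperCF

variable {K : Type*} [Field K]

open Polynomial

lemma emb_monomial (n : ℕ) (a : K) : emb (monomial n a) = HahnSeries.single (-(n : ℤ)) a := by
  have hC : algebraMap K (LaurentSeries K) a = HahnSeries.single 0 a := by
    rw [HahnSeries.algebraMap_apply', PowerSeries.algebraMap_apply]
    simp [HahnSeries.C_apply]
  simp only [emb, AlgHom.toRingHom_eq_coe, RingHom.coe_coe, aeval_monomial, Tvar,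
    HahnSeries.single_pow, hC, HahnSeries.single_mul_single]
  simp

lemma coeff_emb (P : K[X]) (r : ℤ) :
    (emb P).coeff r = if r ≤ 0 then P.coeff (-r).toNat else 0 := by
  induction P using Polynomial.induction_on' with
  | add p q hp hq =>
    rw [map_add, HahnSeries.coeff_add, hp, hq, coeff_add]
    split_ifs <;> simp
  | monomial n a =>
    rw [emb_monomial, HahnSeries.coeff_single, coeff_monomial]
    split_ifs <;> first | rfl | omega

lemma coeff_emb_neg_natCast (P : K[X]) (n : ℕ) : (emb P).coeff (-(n : ℤ)) = P.coeff n := by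
  simp [coeff_emb]

lemma coeff_emb_of_pos (P : K[X]) {r : ℤ} (hr : 0 < r) : (emb P).coeff r = 0 := by
  simp [coeff_emb, hr.not_ge]

lemma coeff_emb_mul {P : K[X]} {N : ℕ} (hP : P.natDegree < N) (y : LaurentSeries K) (m : ℤ) :
    (emb P * y).coeff m = ∑ i ∈ Finset.range N, P.coeff i * y.coeff (m + i) := by
  conv_lhs => rw [P.as_sum_range' N hP, map_sum, Finset.sum_mul]
  simp only [HahnSeries.coeff_sum, emb_monomial]
  refine Finset.sum_congr rfl fun i _ => ?_
  rw [show m = m + i + -(i : ℤ) by ring, HahnSeries.coeff_single_mul_add, add_neg_cancel_right]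

lemma orderTop_emb {P : K[X]} (hP : P ≠ 0) : (emb P).orderTop = -(P.natDegree : ℤ) := by
  refine le_antisymm (HahnSeries.orderTop_le_of_coeff_ne_zero ?_) ?_
  · rwa [coeff_emb_neg_natCast, ne_eq, ← leadingCoeff, leadingCoeff_eq_zero]
  · refine HahnSeries.le_orderTop_iff_forall.2 fun r hr => ?_
    have hr' : r < -(P.natDegree : ℤ) := by exact_mod_cast hr
    rw [coeff_emb, if_pos (by omega)]
    exact coeff_eq_zero_of_natDegree_lt (by omega)

lemma eq_zero_of_zero_lt_orderTop_emb {P : K[X]} (h : 0 < (emb P).orderTop) : P = 0 := by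
  by_contra hP
  rw [orderTop_emb hP] at h
  norm_cast at h
  omega

lemma coe_lt_orderTop_emb_mul_iff {P : K[X]} (hP : P ≠ 0) (y : LaurentSeries K) (n : ℤ) :
    (n : WithTop ℤ) < (emb P * y).orderTop ↔ ((n + P.natDegree : ℤ) : WithTop ℤ) < y.orderTop := by
  rw [HahnSeries.orderTop_mul, orderTop_emb hP]
  induction y.orderTop using WithTop.recTopCoe
  · simp
  · norm_cast
    omega

lemma coe_lt_orderTop_iff {x : LaurentSeries K} {n : ℤ} :
    (n : WithTop ℤ) < x.orderTop ↔ ∀ m ≤ n, x.coeff m = 0 := by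
  have hsucc : (n : WithTop ℤ) < x.orderTop ↔ ((n + 1 : ℤ) : WithTop ℤ) ≤ x.orderTop := by
    induction x.orderTop using WithTop.recTopCoe
    · simp
    · norm_cast
  rw [hsucc, HahnSeries.le_orderTop_iff_forall]
  norm_cast
  simp only [Int.lt_add_one_iff]

lemma orderTop_inv_add_orderTop {x : LaurentSeries K} (hx : x ≠ 0) :
    x⁻¹.orderTop + x.orderTop = 0 := by
  rw [← HahnSeries.orderTop_mul, inv_mul_cancel₀ hx, HahnSeries.orderTop_one]

lemma coeff_polyPart (β : LaurentSeries K) (i : ℕ) : (polyPart β).coeff i = β.coeff (-(i : ℤ)) := by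
  rw [polyPart, finsetSum_coeff]
  simp only [coeff_monomial]
  rw [Finset.sum_ite_eq' _ i]
  split_ifs with h
  · rfl
  · rw [Finset.mem_range, not_lt] at h
    rcases eq_or_ne β 0 with rfl | hβ
    · simp
    · exact (HahnSeries.coeff_eq_zero_of_lt_order (by omega)).symm

lemma zero_lt_orderTop_sub_emb_polyPart (β : LaurentSeries K) :
    0 < (β - emb (polyPart β)).orderTop := by
  refine coe_lt_orderTop_iff.2 fun m hm => ?_
  rw [HahnSeries.coeff_sub, coeff_emb, if_pos hm, coeff_polyPart,
    show -((-m).toNat : ℤ) = m by omega, sub_self]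

lemma orderTop_emb_polyPart {β : LaurentSeries K} (hβ : β.orderTop ≤ 0) :
    (emb (polyPart β)).orderTop = β.orderTop := by
  simpa using HahnSeries.orderTop_sub (hβ.trans_lt (zero_lt_orderTop_sub_emb_polyPart β))

section ContinuedFraction

variable {α : LaurentSeries K} {m n : ℕ}

lemma inv_cq_succ (α : LaurentSeries K) (n : ℕ) : (cq α (n + 1))⁻¹ = cq α n - emb (pq α n) :=
  inv_inv _

lemma cq_succ_eq_zero (h : cq α n = 0) : cq α (n + 1) = 0 := by
  simp [cq, h, polyPart, HahnSeries.coeff_zero]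

lemma cq_ne_zero_of_le (hmn : m ≤ n) (h : cq α n ≠ 0) : cq α m ≠ 0 := by
  induction n, hmn using Nat.le_induction with
  | base => exact h
  | succ n _ ih => exact ih (mt cq_succ_eq_zero h)

lemma zero_lt_orderTop_inv_cq_succ (α : LaurentSeries K) (n : ℕ) :
    0 < (cq α (n + 1))⁻¹.orderTop := by
  rw [inv_cq_succ]
  exact zero_lt_orderTop_sub_emb_polyPart _

lemma orderTop_inv_cq_succ (h : cq α (n + 1) ≠ 0) :
    (cq α (n + 1))⁻¹.orderTop = (pq α (n + 1)).natDegree := by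
  have hsum := orderTop_inv_add_orderTop h
  have hpos := zero_lt_orderTop_inv_cq_succ α n
  obtain ⟨b, hb⟩ := WithTop.ne_top_iff_exists.1 (HahnSeries.orderTop_ne_top.2 h)
  obtain ⟨c, hc⟩ := WithTop.ne_top_iff_exists.1 (HahnSeries.orderTop_ne_top.2 (inv_ne_zero h))
  rw [← hb, ← hc] at hsum
  rw [← hc] at hpos ⊢
  norm_cast at hsum hpos
  have hemb := orderTop_emb_polyPart (β := cq α (n + 1)) (by rw [← hb]; norm_cast; omega)
  have hpq : pq α (n + 1) ≠ 0 := by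
    rintro h0
    rw [← pq, h0, map_zero, HahnSeries.orderTop_zero, ← hb] at hemb
    exact WithTop.top_ne_coe hemb
  rw [← pq, orderTop_emb hpq, ← hb] at hemb
  norm_cast at hemb ⊢
  omega

lemma one_le_natDegree_pq_succ (h : cq α (n + 1) ≠ 0) : 1 ≤ (pq α (n + 1)).natDegree := by
  have := zero_lt_orderTop_inv_cq_succ α n
  rw [orderTop_inv_cq_succ h] at this
  exact_mod_cast this

lemma contQ_zero (α : LaurentSeries K) : contQ α 0 = 1 := rfl
lemma contQ_one (α : LaurentSeries K) : contQ α 1 = pq α 1 := rfl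
lemma contP_zero (α : LaurentSeries K) : contP α 0 = pq α 0 := rfl
lemma contP_one (α : LaurentSeries K) : contP α 1 = pq α 1 * pq α 0 + 1 := rfl

lemma contQ_add_two (α : LaurentSeries K) (n : ℕ) :
    contQ α (n + 2) = pq α (n + 2) * contQ α (n + 1) + contQ α n := rfl

lemma contP_add_two (α : LaurentSeries K) (n : ℕ) :
    contP α (n + 2) = pq α (n + 2) * contP α (n + 1) + contP α n := rfl

lemma contP_succ_mul_contQ_sub (α : LaurentSeries K) (n : ℕ) :
    contP α (n + 1) * contQ α n - contP α n * contQ α (n + 1) = (-1) ^ n := by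
  induction n with
  | zero => rw [contP_one, contQ_zero, contP_zero, contQ_one]; ring
  | succ n ih =>
    rw [contP_add_two, contQ_add_two]
    linear_combination -ih

lemma isCoprime_contQ_contP (α : LaurentSeries K) (n : ℕ) : IsCoprime (contQ α n) (contP α n) :=
  have hsq : ((-1 : K[X]) ^ n) ^ 2 = 1 := by rw [← pow_mul, pow_mul', neg_one_sq, one_pow]
  ⟨(-1) ^ n * contP α (n + 1), -(-1) ^ n * contQ α (n + 1), by
    linear_combination (-1) ^ n * contP_succ_mul_contQ_sub α n + hsq⟩

lemma natDegree_contQ_succ (h : cq α (n + 1) ≠ 0) :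
    (contQ α (n + 1)).natDegree = (pq α (n + 1)).natDegree + (contQ α n).natDegree := by
  induction n with
  | zero => rw [zero_add, contQ_one, contQ_zero, natDegree_one, add_zero]
  | succ n ih =>
    have h' : cq α (n + 1) ≠ 0 := cq_ne_zero_of_le (by omega) h
    have hdeg := one_le_natDegree_pq_succ h
    have hdeg' := one_le_natDegree_pq_succ h'
    have hpq : pq α (n + 2) ≠ 0 := by
      rintro h0
      rw [h0, natDegree_zero] at hdeg
      omega
    have hq : contQ α (n + 1) ≠ 0 := by
      rintro h0
      have := ih h'
      rw [h0, natDegree_zero] at this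
      omega
    have hlt : (contQ α n).natDegree < (pq α (n + 2) * contQ α (n + 1)).natDegree := by
      rw [natDegree_mul hpq hq, ih h']
      omega
    rw [contQ_add_two, natDegree_add_eq_left_of_natDegree_lt hlt, natDegree_mul hpq hq]

lemma contQ_ne_zero (hn : ConvAt α n) : contQ α n ≠ 0 := by
  rcases n with _ | n
  · exact one_ne_zero
  · have h := hn.resolve_left n.succ_ne_zero
    refine ne_zero_of_natDegree_gt (n := 0) ?_
    have := one_le_natDegree_pq_succ h
    rw [natDegree_contQ_succ h]
    omega

lemma natDegree_contQ_lt_succ (h : cq α (n + 1) ≠ 0) :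
    (contQ α n).natDegree < (contQ α (n + 1)).natDegree := by
  have := one_le_natDegree_pq_succ h
  rw [natDegree_contQ_succ h]
  omega

lemma le_natDegree_contQ (hn : ConvAt α n) : n ≤ (contQ α n).natDegree := by
  induction n with
  | zero => exact Nat.zero_le _
  | succ n ih =>
    have h := hn.resolve_left n.succ_ne_zero
    exact (ih (.inr (cq_ne_zero_of_le n.le_succ h))).trans_lt (natDegree_contQ_lt_succ h)

def approxErr (α : LaurentSeries K) (n : ℕ) : LaurentSeries K :=
  emb (contQ α n) * α - emb (contP α n)

lemma approxErr_zero (α : LaurentSeries K) : approxErr α 0 = (cq α 1)⁻¹ := by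
  rw [inv_cq_succ, approxErr, contQ_zero, contP_zero, map_one, one_mul]
  rfl

lemma approxErr_add_two (α : LaurentSeries K) (n : ℕ) :
    approxErr α (n + 2) = emb (pq α (n + 2)) * approxErr α (n + 1) + approxErr α n := by
  simp only [approxErr, contQ_add_two, contP_add_two, map_add, map_mul]
  ring

lemma approxErr_succ (h : cq α (n + 1) ≠ 0) :
    approxErr α (n + 1) = -(cq α (n + 2))⁻¹ * approxErr α n := by
  induction n with
  | zero =>
    have hE := approxErr_zero α
    rw [approxErr, contQ_zero, contP_zero, map_one, one_mul] at hE
    rw [inv_cq_succ, approxErr, approxErr, contQ_one, contP_one, contQ_zero, contP_zero]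
    simp only [map_add, map_mul, map_one]
    linear_combination cq α 1 * hE + mul_inv_cancel₀ h
  | succ n ih =>
    have h' : cq α (n + 1) ≠ 0 := cq_ne_zero_of_le (by omega) h
    rw [approxErr_add_two, inv_cq_succ]
    linear_combination cq α (n + 2) * ih h' - approxErr α n * mul_inv_cancel₀ h

lemma orderTop_approxErr (h : cq α (n + 1) ≠ 0) :
    (approxErr α n).orderTop = (contQ α (n + 1)).natDegree := by
  induction n with
  | zero => rw [approxErr_zero, orderTop_inv_cq_succ h, contQ_one]
  | succ n ih =>
    have h' : cq α (n + 1) ≠ 0 := cq_ne_zero_of_le (by omega) h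
    rw [approxErr_succ h', HahnSeries.orderTop_mul, HahnSeries.orderTop_neg,
      orderTop_inv_cq_succ h, ih h', natDegree_contQ_succ h]
    norm_cast

lemma approxErr_eq_zero (hn : ConvAt α n) (h : cq α (n + 1) = 0) : approxErr α n = 0 := by
  rcases n with _ | n
  · rw [approxErr_zero, h, inv_zero]
  · rw [approxErr_succ (hn.resolve_left n.succ_ne_zero), h, inv_zero, neg_zero, zero_mul]

end ContinuedFraction

lemma mulVec_hankel (α : LaurentSeries K) {j : ℕ} {q : K[X]} (hq : q.natDegree < j) :
    (hankel α j).mulVec (fun i => q.coeff i) = fun k : Fin j => (emb q * α).coeff (k + 1) := by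
  funext k
  rw [coeff_emb_mul hq, Finset.sum_range, Matrix.mulVec, dotProduct]
  refine Finset.sum_congr rfl fun l _ => ?_
  rw [hankel, Matrix.of_apply, mul_comm, add_right_comm]

lemma exists_coe_lt_orderTop_sub_emb_iff (β : LaurentSeries K) (j : ℕ) :
    (∃ p : K[X], ((j : ℤ) : WithTop ℤ) < (β - emb p).orderTop) ↔
      ∀ k : Fin j, β.coeff (k + 1) = 0 := by
  constructor
  · rintro ⟨p, hp⟩ k
    have := coe_lt_orderTop_iff.1 hp (k + 1) (by omega)
    rwa [HahnSeries.coeff_sub, coeff_emb_of_pos _ (by positivity), sub_zero] at this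
  · refine fun h => ⟨polyPart β, coe_lt_orderTop_iff.2 fun m hm => ?_⟩
    rcases le_or_gt m 0 with hm0 | hm0
    · exact coe_lt_orderTop_iff.1 (zero_lt_orderTop_sub_emb_polyPart β) m hm0
    · rw [HahnSeries.coeff_sub, coeff_emb_of_pos _ hm0, sub_zero,
        show m = ((m - 1).toNat : ℕ) + 1 by omega]
      exact h ⟨(m - 1).toNat, by omega⟩

lemma hankel_det_eq_zero_iff (α : LaurentSeries K) (j : ℕ) :
    (hankel α j).det = 0 ↔ ∃ q p : K[X], q ≠ 0 ∧ q.natDegree < j ∧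
      ((j : ℤ) : WithTop ℤ) < (emb q * α - emb p).orderTop := by
  classical
  rw [← Matrix.exists_mulVec_eq_zero_iff]
  constructor
  · rintro ⟨v, hv, hHv⟩
    obtain ⟨⟨q, hq⟩, rfl⟩ := (degreeLTEquiv K j).surjective v
    have hq0 : q ≠ 0 := by
      rintro rfl
      exact hv ((degreeLTEquiv_eq_zero_iff_eq_zero hq).2 rfl)
    have hdeg : q.natDegree < j := (natDegree_lt_iff_degree_lt hq0).2 (mem_degreeLT.1 hq)
    obtain ⟨p, hp⟩ := (exists_coe_lt_orderTop_sub_emb_iff (emb q * α) j).2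
      (funext_iff.1 ((mulVec_hankel α hdeg).symm.trans hHv))
    exact ⟨q, p, hq0, hdeg, hp⟩
  · rintro ⟨q, p, hq0, hdeg, hp⟩
    refine ⟨fun i => q.coeff i, fun h0 => hq0 ?_, ?_⟩
    · exact leadingCoeff_eq_zero.1 (congrFun h0 ⟨_, hdeg⟩)
    · rw [mulVec_hankel α hdeg]
      exact funext ((exists_coe_lt_orderTop_sub_emb_iff _ j).1 ⟨p, hp⟩)

lemma exists_eq_mul_of_mul_eq_mul {R : Type*} [CommRing R] [IsDomain R] {a b c d : R}
    (hcd : IsCoprime c d) (hc : c ≠ 0) (h : a * d = c * b) : ∃ u, a = u * c ∧ b = u * d := by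
  obtain ⟨u, rfl⟩ := hcd.dvd_of_dvd_mul_right ⟨b, h⟩
  exact ⟨u, mul_comm _ _, mul_left_cancel₀ hc (by linear_combination -h)⟩

section BestApproximation

variable {α : LaurentSeries K} {k : ℕ}

lemma orderTop_sub_le_natDegree_contQ (hk : cq α (k + 1) ≠ 0) {q : K[X]} (hq : q ≠ 0)
    (hdeg : q.natDegree < (contQ α (k + 1)).natDegree) (p : K[X]) :
    (emb q * α - emb p).orderTop ≤ (contQ α (k + 1)).natDegree := by
  by_contra! hlt
  have hqk : contQ α k ≠ 0 := contQ_ne_zero (.inr (cq_ne_zero_of_le k.le_succ hk))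
  have hErr := orderTop_approxErr hk
  have hpos : 0 < (emb (contQ α k) * (emb q * α - emb p) - emb q * approxErr α k).orderTop := by
    refine lt_of_lt_of_le (lt_min ?_ ?_) HahnSeries.min_orderTop_le_orderTop_sub
    · refine (coe_lt_orderTop_emb_mul_iff hqk _ 0).2 (lt_trans ?_ hlt)
      exact_mod_cast by simpa using natDegree_contQ_lt_succ hk
    · refine (coe_lt_orderTop_emb_mul_iff hq _ 0).2 ?_
      rw [hErr]
      exact_mod_cast by simpa using hdeg
  have hcross : q * contP α k = contQ α k * p := by
    refine sub_eq_zero.1 (eq_zero_of_zero_lt_orderTop_emb ?_)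
    convert hpos using 2
    simp only [approxErr, map_sub, map_mul]
    ring
  obtain ⟨c, rfl, rfl⟩ := exists_eq_mul_of_mul_eq_mul (isCoprime_contQ_contP α k) hqk hcross
  have hc : c ≠ 0 := left_ne_zero_of_mul hq
  rw [show emb (c * contQ α k) * α - emb (c * contP α k) = emb c * approxErr α k by
    simp only [approxErr, map_mul]; ring] at hlt
  have := (coe_lt_orderTop_emb_mul_iff hc _ _).1 hlt
  rw [hErr] at this
  norm_cast at this
  omega

lemma exists_convAt_natDegree_le_lt_orderTop (α : LaurentSeries K) (j : ℕ) :
    ∃ n, ConvAt α n ∧ (contQ α n).natDegree ≤ j ∧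
      ((j : ℤ) : WithTop ℤ) < (approxErr α n).orderTop := by
  classical
  let P := fun m => ConvAt α m ∧ (contQ α m).natDegree ≤ j
  have hP0 : P 0 := ⟨.inl rfl, by simp [contQ_zero]⟩
  obtain ⟨hn, hdeg⟩ : P (Nat.findGreatest P j) := Nat.findGreatest_spec (Nat.zero_le j) hP0
  refine ⟨_, hn, hdeg, ?_⟩
  by_cases h : cq α (Nat.findGreatest P j + 1) = 0
  · simp [approxErr_eq_zero hn h]
  · rw [orderTop_approxErr h]
    norm_cast
    by_contra! hle
    exact Nat.findGreatest_is_greatest (Nat.lt_succ_self _)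
      ((le_natDegree_contQ (.inr h)).trans hle) ⟨.inr h, hle⟩

end BestApproximation

end PaperCF

open PaperCF in
theorem hankel_det_ne_zero_iff_exists_convergent_general {K : Type*} [Field K]
    (α : LaurentSeries K) (j : ℕ) :
    (∃ n : ℕ, ConvAt α n ∧ (contQ α n).natDegree = j) ↔ (hankel α j).det ≠ 0 := by
  rw [Ne, hankel_det_eq_zero_iff]
  constructor
  · rintro ⟨n, hn, rfl⟩ ⟨q, p, hq, hdeg, hlt⟩
    rcases n with _ | k
    · simp [contQ_zero] at hdeg
    · exact (orderTop_sub_le_natDegree_contQ (hn.resolve_left k.succ_ne_zero) hq hdeg p).not_gt hlt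
  · intro hdet
    by_contra! h
    obtain ⟨n, hn, hle, hlt⟩ := exists_convAt_natDegree_le_lt_orderTop α j
    exact hdet ⟨contQ α n, contP α n, contQ_ne_zero hn, hle.lt_of_ne (h n hn), hlt⟩

open PaperCF in
/-- For `α ∈ K((T⁻¹))` of positive order and `j ≥ 1`, `α` has a
convergent `pₙ/qₙ` with `deg qₙ = j` iff the `j`-th Hankel determinant is non-zero. -/
theorem hankel_det_ne_zero_iff_exists_convergent {K : Type*} [Field K]
    (α : LaurentSeries K) (hα : ∀ n : ℤ, n ≤ 0 → α.coeff n = 0)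
    (j : ℕ) (hj : 1 ≤ j) :
    (∃ n : ℕ, ConvAt α n ∧ (contQ α n).natDegree = j) ↔ (hankel α j).det ≠ 0 :=
  hankel_det_ne_zero_iff_exists_convergent_general α j
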